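/- Let b* minimize ‖Xb‖₂² over {b : ‖b_S‖₁ − ‖b_{−S}‖₁ = 1} and suppose this minimum is strictly positive. Then X^T X b* = z* ‖Xb*‖₂², where z* ∈ ℝ^p satisfies: z*_j = sign(b*_j) for j ∈ S, and z*_{−S} belongs to −∂‖b*_{−S}‖₁, i.e. ‖z*_{−S}‖_∞ ≤ 1 and z*_{−S}^T b*_{−S} = −‖b*_{−S}‖₁. -/

import Mathlib

open Finset

noncomputable def l1 {p : ℕ} (b : Fin p → ℝ) : ℝ := ∑ j, |b j|

def restr {p : ℕ} (S : Finset (Fin p)) (b : Fin p → ℝ) : Fin p → ℝ :=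
  fun j => if j ∈ S then b j else 0

noncomputable def qf {n p : ℕ} (X : Matrix (Fin n) (Fin p) ℝ) (b : Fin p → ℝ) : ℝ :=
  ∑ i, (X.mulVec b i) ^ 2

/-- The compatibility constant κ̂(v,S) (square root of the minimal value). -/
noncomputable def kappaHat {n p : ℕ} (X : Matrix (Fin n) (Fin p) ℝ) (S : Finset (Fin p))
    (v : ℝ) : ℝ :=
  Real.sqrt (sInf {c : ℝ | ∃ b : Fin p → ℝ,
    l1 (restr S b) - v * l1 (restr Sᶜ b) = 1 ∧ c = (S.card : ℝ) * qf X b / n})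

/-! By homogeneity, `b*` minimises `qf X b - qf X b* * (‖b_S‖₁ - ‖b_{-S}‖₁) ^ 2` on the cone
where the constraint function is positive, with minimum `0`. Perturbing one coordinate of `b*` and
comparing first-order terms gives the stationarity conditions for `z = XᵀX b* / qf X b*`: on `S`
the subgradient inequality `sign x * y ≤ |x + y| - |x|` pins `z_j` to `sign b*_j`; off `S` the
triangle inequality gives `|z_j| ≤ 1`, and rescaling the coordinate `b*_j` itself gives
`z_j b*_j = -|b*_j|`. -/

open Filter Topology Matrix

lemma Real.sign_mul_le_abs_add_sub_abs (x y : ℝ) : Real.sign x * y ≤ |x + y| - |x| := by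
  rcases lt_trichotomy x 0 with hx | rfl | hx
  · rw [Real.sign_of_neg hx, abs_of_neg hx]
    linarith [neg_abs_le (x + y)]
  · simp
  · rw [Real.sign_of_pos hx, abs_of_pos hx]
    linarith [le_abs_self (x + y)]

lemma nonpos_of_eventually_mul_le_mul_sq {a c : ℝ}
    (h : ∀ᶠ t in 𝓝[>] (0 : ℝ), a * t ≤ c * t ^ 2) : a ≤ 0 := by
  have hle : ∀ᶠ t in 𝓝[>] (0 : ℝ), a ≤ c * t := by
    filter_upwards [h, self_mem_nhdsWithin] with t ht (htpos : 0 < t)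
    exact le_of_mul_le_mul_right (by linarith) htpos
  have hlim : Tendsto (fun t => c * t) (𝓝[>] (0 : ℝ)) (𝓝 0) := by
    simpa using ((continuous_const_mul c).tendsto 0).mono_left nhdsWithin_le_nhds
  exact ge_of_tendsto hlim hle

section Norms

variable {p : ℕ}

lemma l1_restr (T : Finset (Fin p)) (b : Fin p → ℝ) : l1 (restr T b) = ∑ j ∈ T, |b j| := by
  simp only [l1, restr, apply_ite abs, abs_zero, Finset.sum_ite_mem, Finset.univ_inter]

lemma l1_restr_smul (T : Finset (Fin p)) {c : ℝ} (hc : 0 ≤ c) (b : Fin p → ℝ) :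
    l1 (restr T (c • b)) = c * l1 (restr T b) := by
  simp only [l1_restr, Pi.smul_apply, smul_eq_mul, abs_mul, abs_of_nonneg hc, Finset.mul_sum]

lemma l1_restr_add_single (T : Finset (Fin p)) (b : Fin p → ℝ) (j : Fin p) (s : ℝ) :
    l1 (restr T (b + Pi.single j s)) =
      l1 (restr T b) + if j ∈ T then |b j + s| - |b j| else 0 := by
  rw [← sub_eq_iff_eq_add', l1_restr, l1_restr, ← Finset.sum_sub_distrib,
    ← Finset.sum_ite_eq' T j fun k => |b k + s| - |b k|]
  refine Finset.sum_congr rfl fun k _ => ?_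
  by_cases hk : k = j
  · subst hk; simp
  · simp [hk]

noncomputable def l1Diff (S : Finset (Fin p)) (b : Fin p → ℝ) : ℝ :=
  l1 (restr S b) - l1 (restr Sᶜ b)

lemma l1Diff_smul (S : Finset (Fin p)) {c : ℝ} (hc : 0 ≤ c) (b : Fin p → ℝ) :
    l1Diff S (c • b) = c * l1Diff S b := by
  rw [l1Diff, l1Diff, l1_restr_smul _ hc, l1_restr_smul _ hc, mul_sub]

lemma l1Diff_add_single (S : Finset (Fin p)) (b : Fin p → ℝ) (j : Fin p) (s : ℝ) :
    l1Diff S (b + Pi.single j s) =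
      l1Diff S b + (if j ∈ S then 1 else -1) * (|b j + s| - |b j|) := by
  simp only [l1Diff, l1_restr_add_single, Finset.mem_compl]
  split_ifs <;> ring

end Norms

section QuadraticForm

variable {n p : ℕ} (X : Matrix (Fin n) (Fin p) ℝ)

lemma qf_eq_dotProduct (b : Fin p → ℝ) : qf X b = X *ᵥ b ⬝ᵥ X *ᵥ b := by
  simp only [qf, dotProduct, sq]

lemma gram_mulVec_dotProduct (b d : Fin p → ℝ) :
    (Xᵀ * X) *ᵥ b ⬝ᵥ d = X *ᵥ b ⬝ᵥ X *ᵥ d := by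
  rw [← mulVec_mulVec, mulVec_transpose, dotProduct_mulVec]

lemma qf_smul (c : ℝ) (b : Fin p → ℝ) : qf X (c • b) = c ^ 2 * qf X b := by
  simp only [qf_eq_dotProduct, mulVec_smul, smul_dotProduct, dotProduct_smul, smul_eq_mul]
  ring

lemma qf_add_smul (b d : Fin p → ℝ) (t : ℝ) :
    qf X (b + t • d) = qf X b + 2 * t * ((Xᵀ * X) *ᵥ b ⬝ᵥ d) + t ^ 2 * qf X d := by
  simp only [qf_eq_dotProduct, gram_mulVec_dotProduct, mulVec_add, mulVec_smul, add_dotProduct,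
    dotProduct_add, smul_dotProduct, dotProduct_smul, smul_eq_mul, dotProduct_comm (X *ᵥ d)]
  ring

end QuadraticForm

section Minimizer

variable {n p : ℕ} {X : Matrix (Fin n) (Fin p) ℝ} {S : Finset (Fin p)} {b₀ : Fin p → ℝ}
  (hmin : ∀ b, l1Diff S b = 1 → qf X b₀ ≤ qf X b)
include hmin

lemma qf_mul_sq_l1Diff_le {b : Fin p → ℝ} (hb : 0 < l1Diff S b) :
    qf X b₀ * l1Diff S b ^ 2 ≤ qf X b := by
  set g := l1Diff S b
  have hscaled : qf X b₀ ≤ g⁻¹ ^ 2 * qf X b := by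
    rw [← qf_smul]
    exact hmin _ (by rw [l1Diff_smul _ (inv_nonneg.mpr hb.le), inv_mul_cancel₀ hb.ne'])
  calc qf X b₀ * g ^ 2 ≤ g⁻¹ ^ 2 * qf X b * g ^ 2 := by gcongr
    _ = qf X b := by field_simp

lemma qf_mul_le_gram_mulVec_dotProduct {d : Fin p → ℝ} {k : ℝ}
    (hk : ∀ᶠ t in 𝓝[>] (0 : ℝ), 1 + k * t ≤ l1Diff S (b₀ + t • d)) :
    qf X b₀ * k ≤ (Xᵀ * X) *ᵥ b₀ ⬝ᵥ d := by
  have hpos : ∀ᶠ t in 𝓝[>] (0 : ℝ), 0 < 1 + k * t := by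
    have : Tendsto (fun t => 1 + k * t) (𝓝 (0 : ℝ)) (𝓝 1) := by
      simpa using ((continuous_const_mul k).const_add 1).tendsto 0
    exact (this.eventually (lt_mem_nhds one_pos)).filter_mono nhdsWithin_le_nhds
  suffices 2 * (qf X b₀ * k - (Xᵀ * X) *ᵥ b₀ ⬝ᵥ d) ≤ 0 by linarith
  refine nonpos_of_eventually_mul_le_mul_sq (c := qf X d - qf X b₀ * k ^ 2) ?_
  filter_upwards [hk, hpos] with t hkt hpt
  have hquad := qf_mul_sq_l1Diff_le hmin (hpt.trans_le hkt)
  have hsq : (1 + k * t) ^ 2 ≤ l1Diff S (b₀ + t • d) ^ 2 := pow_le_pow_left₀ hpt.le hkt 2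
  have hQ : 0 ≤ qf X b₀ := by rw [qf]; positivity
  rw [qf_add_smul] at hquad
  nlinarith [mul_le_mul_of_nonneg_left hsq hQ]

variable (h₀ : l1Diff S b₀ = 1)
include h₀

lemma qf_mul_le_gram_mulVec_apply_mul {j : Fin p} {c k : ℝ}
    (hk : ∀ᶠ t in 𝓝[>] (0 : ℝ),
      k * t ≤ (if j ∈ S then 1 else -1) * (|b₀ j + t * c| - |b₀ j|)) :
    qf X b₀ * k ≤ ((Xᵀ * X) *ᵥ b₀) j * c := by
  rw [← dotProduct_single ((Xᵀ * X) *ᵥ b₀) c j]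
  refine qf_mul_le_gram_mulVec_dotProduct hmin (hk.mono fun t ht => ?_)
  rw [← Pi.single_smul, smul_eq_mul, l1Diff_add_single, h₀]
  linarith

lemma gram_mulVec_apply_of_mem {j : Fin p} (hj : j ∈ S) :
    ((Xᵀ * X) *ᵥ b₀) j = qf X b₀ * Real.sign (b₀ j) := by
  have hup := qf_mul_le_gram_mulVec_apply_mul hmin h₀ (j := j) (c := 1)
    (k := Real.sign (b₀ j)) <| .of_forall fun t => by
      simpa [hj] using Real.sign_mul_le_abs_add_sub_abs (b₀ j) t
  have hdown := qf_mul_le_gram_mulVec_apply_mul hmin h₀ (j := j) (c := -1)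
    (k := -Real.sign (b₀ j)) <| .of_forall fun t => by
      simpa [hj, ← sub_eq_add_neg] using Real.sign_mul_le_abs_add_sub_abs (b₀ j) (-t)
  linarith

lemma neg_qf_mul_abs_le_of_notMem {j : Fin p} (hj : j ∉ S) (c : ℝ) :
    -(qf X b₀ * |c|) ≤ ((Xᵀ * X) *ᵥ b₀) j * c := by
  rw [← mul_neg]
  refine qf_mul_le_gram_mulVec_apply_mul hmin h₀ ?_
  filter_upwards [self_mem_nhdsWithin] with t (ht : 0 < t)
  have := abs_add_le (b₀ j) (t * c)
  rw [abs_mul, abs_of_pos ht] at this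
  simp only [hj, if_false]
  linarith

lemma gram_mulVec_apply_mul_self_of_notMem {j : Fin p} (hj : j ∉ S) :
    ((Xᵀ * X) *ᵥ b₀) j * b₀ j = -(qf X b₀ * |b₀ j|) := by
  have hshrink := qf_mul_le_gram_mulVec_apply_mul hmin h₀ (j := j) (c := -b₀ j)
      (k := |b₀ j|) <| by
    filter_upwards [Ioo_mem_nhdsGT one_pos] with t ⟨ht0, ht1⟩
    have : |b₀ j + t * -b₀ j| = (1 - t) * |b₀ j| := by
      rw [show b₀ j + t * -b₀ j = (1 - t) * b₀ j by ring, abs_mul, abs_of_pos (by linarith)]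
    simp only [hj, if_false, this]
    linarith
  linarith [neg_qf_mul_abs_le_of_notMem hmin h₀ hj (b₀ j)]

end Minimizer

theorem stmt6 {n p : ℕ} (X : Matrix (Fin n) (Fin p) ℝ) (S : Finset (Fin p))
    (bstar : Fin p → ℝ)
    (hcon : l1 (restr S bstar) - l1 (restr Sᶜ bstar) = 1)
    (hmin : ∀ b : Fin p → ℝ, l1 (restr S b) - l1 (restr Sᶜ b) = 1 →
      qf X bstar ≤ qf X b)
    (hpos : 0 < qf X bstar) :
    ∃ z : Fin p → ℝ,
      (∀ j, ((X.transpose * X).mulVec bstar) j = z j * qf X bstar) ∧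
      (∀ j ∈ S, z j = Real.sign (bstar j)) ∧
      (∀ j ∉ S, |z j| ≤ 1) ∧
      (∑ j ∈ Sᶜ, z j * bstar j) = -(l1 (restr Sᶜ bstar)) := by
  refine ⟨fun j => ((Xᵀ * X) *ᵥ bstar) j / qf X bstar,
    fun j => (div_mul_cancel₀ _ hpos.ne').symm, fun j hj => ?_, fun j hj => ?_, ?_⟩
  · dsimp only
    rw [gram_mulVec_apply_of_mem hmin hcon hj, mul_div_cancel_left₀ _ hpos.ne']
  · have hplus := neg_qf_mul_abs_le_of_notMem hmin hcon hj 1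
    have hminus := neg_qf_mul_abs_le_of_notMem hmin hcon hj (-1)
    dsimp only
    rw [abs_div, abs_of_pos hpos, div_le_one hpos, abs_le]
    constructor <;> simp only [abs_one, abs_neg] at hplus hminus <;> linarith
  · calc ∑ j ∈ Sᶜ, ((Xᵀ * X) *ᵥ bstar) j / qf X bstar * bstar j
          = ∑ j ∈ Sᶜ, -|bstar j| :=
          Finset.sum_congr rfl fun j hj => by
            rw [div_mul_eq_mul_div, gram_mulVec_apply_mul_self_of_notMem hmin hcon
              (Finset.mem_compl.mp hj), neg_div, mul_div_cancel_left₀ _ hpos.ne']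
      _ = -l1 (restr Sᶜ bstar) := by rw [Finset.sum_neg_distrib, l1_restr]
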